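/- arXiv:1512.01697 — 4 statements merged into one kernel-verified Lean document; each statement's English description precedes it below -/
import Mathlib

section
/- Let s be a finite-dimensional semisimple Lie algebra over ℂ that is the direct sum of m ≥ 1 simple ideals s₀ ⊕ s₁ ⊕ ⋯ ⊕ s_{m−1}, and let α be an automorphism of s satisfying α(s_j) = s_{j+1} (indices mod m). Then α has at least m distinct eigenvalues. -/
/-!
The automorphism `α ^ m` preserves the nonzero ideal `s₀`, so it has an eigenvector `v ∈ s₀`,
with an eigenvalue `c ≠ 0`. For every `m`-th root `μ` of `c`, the sum
`w = ∑_{k < m} μ ^ (m - 1 - k) • α ^ k v` telescopes to `α w = μ • w` because `α ^ m v = μ ^ m • v`,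
and `w ≠ 0` because its component in `s₀` is `μ ^ (m - 1) • v`. Hence all `m` distinct `m`-th
roots of `c` are eigenvalues of `α`.
-/

open Finset Polynomial

namespace Module.End

section CommRing

variable {R M : Type*} [CommRing R] [AddCommGroup M] [Module R M] {f : Module.End R M}

theorem apply_sum_eq_smul_of_pow_apply_eq_smul {m : ℕ} {μ : R} {v : M}
    (h : (f ^ m) v = μ ^ m • v) :
    f (∑ k ∈ range m, μ ^ (m - 1 - k) • (f ^ k) v) =
      μ • ∑ k ∈ range m, μ ^ (m - 1 - k) • (f ^ k) v := by
  set F : ℕ → M := fun k => μ ^ (m - k) • (f ^ k) v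
  have hshift : f (∑ k ∈ range m, μ ^ (m - 1 - k) • (f ^ k) v) = ∑ k ∈ range m, F (k + 1) := by
    simp only [map_sum, map_smul, F, pow_succ', mul_apply, Nat.sub_sub, add_comm 1]
  have hscale : μ • ∑ k ∈ range m, μ ^ (m - 1 - k) • (f ^ k) v = ∑ k ∈ range m, F k := by
    rw [smul_sum]
    refine sum_congr rfl fun k hk => ?_
    rw [smul_smul, ← pow_succ']
    congr 2
    have := mem_range.mp hk
    omega
  have hperiodic : F m = F 0 := by simp [F, h]
  rw [hshift, hscale, ← add_left_inj (F 0), ← sum_range_succ', sum_range_succ, hperiodic]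

theorem pow_apply_mem_add {ι : Type*} [AddMonoidWithOne ι] {p : ι → Submodule R M}
    (hf : ∀ j, ∀ x ∈ p j, f x ∈ p (j + 1)) {j : ι} {x : M} (hx : x ∈ p j) (k : ℕ) :
    (f ^ k) x ∈ p (j + k) := by
  induction k with
  | zero => simpa using hx
  | succ k ih =>
    rw [pow_succ', mul_apply, Nat.cast_succ, ← add_assoc]
    exact hf _ _ ih

theorem smul_eq_zero_of_sum_smul_pow_apply_eq_zero {m : ℕ} [NeZero m]
    {p : ZMod m → Submodule R M} (hp : iSupIndep p) (hf : ∀ j, ∀ x ∈ p j, f x ∈ p (j + 1))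
    {v : M} (hv : v ∈ p 0) (c : ℕ → R) (h : ∑ k ∈ range m, c k • (f ^ k) v = 0) :
    c 0 • v = 0 := by
  obtain ⟨n, rfl⟩ := Nat.exists_eq_succ_of_ne_zero (NeZero.ne m)
  rw [sum_range_succ', pow_zero, one_apply, add_eq_zero_iff_neg_eq] at h
  have htail : ∑ k ∈ range n, c (k + 1) • (f ^ (k + 1)) v ∈ ⨆ (j) (_ : j ≠ 0), p j := by
    refine Submodule.sum_mem _ fun k hk => Submodule.smul_mem _ _ ?_
    have hne : ((k + 1 : ℕ) : ZMod (n + 1)) ≠ 0 := by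
      rw [Ne, ZMod.natCast_eq_zero_iff]
      exact Nat.not_dvd_of_pos_of_lt k.succ_pos (by simpa using hk)
    refine Submodule.mem_iSup_of_mem _ (Submodule.mem_iSup_of_mem hne ?_)
    simpa using pow_apply_mem_add hf hv (k + 1)
  exact Submodule.disjoint_def.mp (hp 0) _ (Submodule.smul_mem _ _ hv)
    (h ▸ Submodule.neg_mem _ htail)

end CommRing

section Field

variable {K V : Type*} [Field K] [AddCommGroup V] [Module K V] {f : Module.End K V}

theorem hasEigenvalue_of_pow_apply_eq_pow_smul {m : ℕ} [NeZero m]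
    {p : ZMod m → Submodule K V} (hp : iSupIndep p) (hf : ∀ j, ∀ x ∈ p j, f x ∈ p (j + 1))
    {v : V} (hv : v ∈ p 0) (hv0 : v ≠ 0) {μ : K} (hμ : μ ≠ 0) (h : (f ^ m) v = μ ^ m • v) :
    f.HasEigenvalue μ := by
  refine hasEigenvalue_of_hasEigenvector
    ⟨mem_eigenspace_iff.mpr (apply_sum_eq_smul_of_pow_apply_eq_smul h), fun hw => ?_⟩
  have := smul_eq_zero_of_sum_smul_pow_apply_eq_zero hp hf hv _ hw
  exact (smul_eq_zero.mp this).elim (pow_ne_zero _ hμ) hv0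

theorem exists_apply_eq_smul_of_mapsTo [IsAlgClosed K] [FiniteDimensional K V]
    {q : Submodule K V} (hq : q ≠ ⊥) (hf : ∀ x ∈ q, f x ∈ q) :
    ∃ μ : K, ∃ v ∈ q, v ≠ 0 ∧ f v = μ • v := by
  have := Submodule.nontrivial_iff_ne_bot.mpr hq
  obtain ⟨μ, hμ⟩ := exists_eigenvalue (f.restrict hf)
  obtain ⟨v, hv⟩ := hμ.exists_hasEigenvector
  exact ⟨μ, v, v.2, fun h => hv.2 (Subtype.ext h), congrArg Subtype.val hv.apply_eq_smul⟩

theorem exists_ne_zero_forall_pow_eq_hasEigenvalue [IsAlgClosed K] [FiniteDimensional K V]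
    (hinj : Function.Injective f) {m : ℕ} [NeZero m]
    {p : ZMod m → Submodule K V} (hp : iSupIndep p) (hf : ∀ j, ∀ x ∈ p j, f x ∈ p (j + 1))
    (hp0 : p 0 ≠ ⊥) :
    ∃ c : K, c ≠ 0 ∧ ∀ μ : K, μ ^ m = c → f.HasEigenvalue μ := by
  have hfm : ∀ x ∈ p 0, (f ^ m) x ∈ p 0 := fun x hx => by
    simpa using pow_apply_mem_add hf hx m
  obtain ⟨c, v, hv, hv0, hc⟩ := exists_apply_eq_smul_of_mapsTo hp0 hfm
  have hc0 : c ≠ 0 := by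
    rintro rfl
    rw [zero_smul, ← map_zero (f ^ m)] at hc
    exact hv0 ((coe_pow f m ▸ hinj.iterate m) hc)
  refine ⟨c, hc0, fun μ hμ => ?_⟩
  have hμ0 : μ ≠ 0 := by
    rintro rfl
    exact hc0 (hμ ▸ zero_pow (NeZero.ne m))
  exact hasEigenvalue_of_pow_apply_eq_pow_smul hp hf hv hv0 hμ0 (hμ ▸ hc)

end Field

end Module.End

theorem IsPrimitiveRoot.card_nthRootsFinset_of_ne_zero {R : Type*} [CommRing R] [IsDomain R]
    {ζ : R} {m : ℕ} (hζ : IsPrimitiveRoot ζ m) {a : R} (ha : a ≠ 0) (hroot : ∃ μ, μ ^ m = a) :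
    #(nthRootsFinset m a) = m := by
  classical
  rw [nthRootsFinset_def, Multiset.toFinset_card_of_nodup (hζ.nthRoots_nodup ha),
    hζ.card_nthRoots, if_pos hroot]

theorem Module.End.le_ncard_hasEigenvalue_of_cyclic {K V : Type*} [Field K] [IsAlgClosed K]
    [AddCommGroup V] [Module K V] [FiniteDimensional K V] {f : Module.End K V}
    (hinj : Function.Injective f) {m : ℕ} [NeZero m] {ζ : K} (hζ : IsPrimitiveRoot ζ m)
    {p : ZMod m → Submodule K V} (hp : iSupIndep p) (hf : ∀ j, ∀ x ∈ p j, f x ∈ p (j + 1))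
    (hp0 : p 0 ≠ ⊥) :
    m ≤ {μ : K | f.HasEigenvalue μ}.ncard := by
  obtain ⟨c, hc0, hc⟩ := exists_ne_zero_forall_pow_eq_hasEigenvalue hinj hp hf hp0
  have hroots : ↑(nthRootsFinset m c) ⊆ {μ : K | f.HasEigenvalue μ} := fun μ hμ =>
    hc μ ((mem_nthRootsFinset (NeZero.pos m) c).mp hμ)
  calc m = #(nthRootsFinset m c) :=
        (hζ.card_nthRootsFinset_of_ne_zero hc0 (IsAlgClosed.exists_pow_nat_eq c (NeZero.pos m))).symm
    _ = (↑(nthRootsFinset m c) : Set K).ncard := (Set.ncard_coe_finset _).symm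
    _ ≤ _ := Set.ncard_le_ncard hroots f.finite_hasEigenvalue

theorem eig_ge_of_cyclic_permutation_of_simple_ideals_general
    (s : Type*) [LieRing s] [LieAlgebra ℂ s] [FiniteDimensional ℂ s]
    (m : ℕ) (I : ZMod m → LieIdeal ℂ s)
    (hsimple : ∀ j, LieAlgebra.IsSimple ℂ ↥(I j))
    (hinternal : DirectSum.IsInternal fun j => (I j).toSubmodule)
    (α : s ≃ₗ⁅ℂ⁆ s)
    (hperm : ∀ j, ((I j).toSubmodule).map (α.toLinearEquiv : s →ₗ[ℂ] s) = (I (j + 1)).toSubmodule) :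
    m ≤ {μ : ℂ | Module.End.HasEigenvalue (α.toLinearEquiv : s →ₗ[ℂ] s) μ}.ncard := by
  rcases m.eq_zero_or_pos with rfl | hm
  · exact Nat.zero_le _
  have : NeZero m := ⟨hm.ne'⟩
  have hI0 : (I 0).toSubmodule ≠ ⊥ :=
    Submodule.nontrivial_iff_ne_bot.mp (LieAlgebra.IsSimple.nontrivial ℂ (L := I 0))
  exact Module.End.le_ncard_hasEigenvalue_of_cyclic α.toLinearEquiv.injective
    (Complex.isPrimitiveRoot_exp m hm.ne') hinternal.submodule_iSupIndep
    (fun j x hx => hperm j ▸ Submodule.mem_map_of_mem hx) hI0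

/-- Let `s` be a finite-dimensional semisimple Lie algebra over `ℂ` that is the internal
direct sum of `m ≥ 1` simple ideals `s₀ ⊕ s₁ ⊕ ⋯ ⊕ s_{m-1}`, and let `α` be an automorphism
of `s` satisfying `α(s_j) = s_{j+1}` (indices mod `m`). Then `α` has at least `m` distinct
eigenvalues. -/
theorem eig_ge_of_cyclic_permutation_of_simple_ideals
    (s : Type*) [LieRing s] [LieAlgebra ℂ s] [FiniteDimensional ℂ s]
    (m : ℕ) (hm : 1 ≤ m) (I : ZMod m → LieIdeal ℂ s)
    (hsimple : ∀ j, LieAlgebra.IsSimple ℂ ↥(I j))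
    (hinternal : DirectSum.IsInternal fun j => (I j).toSubmodule)
    (α : s ≃ₗ⁅ℂ⁆ s)
    (hperm : ∀ j, ((I j).toSubmodule).map (α.toLinearEquiv : s →ₗ[ℂ] s) = (I (j + 1)).toSubmodule) :
    m ≤ {μ : ℂ | Module.End.HasEigenvalue (α.toLinearEquiv : s →ₗ[ℂ] s) μ}.ncard :=
  eig_ge_of_cyclic_permutation_of_simple_ideals_general s m I hsimple hinternal α hperm
end

section
/- Let s be a finite-dimensional semisimple Lie algebra over ℂ that is the direct sum of m ≥ 1 simple ideals s₀ ⊕ s₁ ⊕ ⋯ ⊕ s_{m−1}, and let α be an automorphism of s satisfying α(s_j) = s_{j+1} (indices mod m). Let π₀ : s → s₀ and ι₀ : s₀ → s be the projection and inclusion associated with the direct sum decomposition, and let α₀ = π₀ ∘ α^m ∘ ι₀, an automorphism of s₀. Then the fixed-point space of α on s and the fixed-point space of α₀ on s₀ have the same dimension: fix(α) = fix(α₀). -/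
/-!
Write `N j` for the summands, `f` for the automorphism and `π` for the projection onto `N 0`.
Because `f ^ k` carries `N 0` into `N k`, a fixed vector `x` of `f` is recovered from its
component in `N 0` as `x = ∑ k < m, f ^ k (π x)`. Conversely, by telescoping, `∑ k < m, f ^ k y`
is fixed by `f` exactly when `f ^ m y = y`. So `π` restricts to a linear isomorphism between the
two fixed spaces.
-/

open Finset

namespace Module.End

variable {R M : Type*} [CommRing R] [AddCommGroup M] [Module R M]

theorem mem_eigenspace_one {f : End R M} {x : M} : x ∈ f.eigenspace 1 ↔ f x = x := by
  rw [mem_eigenspace_iff, one_smul]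

theorem apply_sum_pow_eq_self_iff (f : End R M) (n : ℕ) (x : M) :
    f (∑ k ∈ range n, (f ^ k) x) = ∑ k ∈ range n, (f ^ k) x ↔ (f ^ n) x = x := by
  have h := congr($(mul_geom_sum f n) x)
  simp only [mul_apply, LinearMap.sub_apply, one_apply, LinearMap.sum_apply] at h
  rw [← sub_eq_zero, h, sub_eq_zero]

section Cyclic

variable {m : ℕ} {N : ZMod m → Submodule R M} {f : End R M} {π : M →ₗ[R] N 0}

theorem pow_apply_mem (hf : ∀ j, ∀ x ∈ N j, f x ∈ N (j + 1)) (k : ℕ) {j : ZMod m} {x : M}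
    (hx : x ∈ N j) : (f ^ k) x ∈ N (j + k) := by
  induction k with
  | zero => simpa using hx
  | succ k ih => simpa [pow_succ', add_assoc] using hf _ _ ih

theorem coe_apply_of_mem (hπ : ∀ x : N 0, π x = x) {x : M} (hx : x ∈ N 0) : (π x : M) = x :=
  congrArg Subtype.val (hπ ⟨x, hx⟩)

theorem proj_pow_apply_eq_self_iff (hf : ∀ j, ∀ x ∈ N j, f x ∈ N (j + 1))
    (hπ : ∀ x : N 0, π x = x) (y : N 0) : π ((f ^ m) y) = y ↔ (f ^ m) y = y := by
  have hmem : (f ^ m) y ∈ N 0 := by simpa using pow_apply_mem hf m y.2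
  rw [← Subtype.coe_inj, coe_apply_of_mem hπ hmem]

variable [NeZero m]

theorem proj_sum_pow_apply (hf : ∀ j, ∀ x ∈ N j, f x ∈ N (j + 1)) (hπ : ∀ x : N 0, π x = x)
    (hπ_ne : ∀ j ≠ 0, ∀ x ∈ N j, π x = 0) (y : N 0) :
    π (∑ k ∈ range m, (f ^ k) y) = y := by
  rw [map_sum, sum_eq_single_of_mem 0 (mem_range.2 (NeZero.pos m)), pow_zero, one_apply, hπ]
  intro k hk hk0
  refine hπ_ne k ?_ _ (by simpa using pow_apply_mem hf k y.2)
  rw [Ne, ZMod.natCast_eq_zero_iff]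
  exact fun hdvd => hk0 (Nat.eq_zero_of_dvd_of_lt hdvd (mem_range.1 hk))

/-- Since `f ^ (m - k)` maps `N j` into `N (j - k)`, only the summand `k = j` survives `π`. -/
theorem sum_pow_proj_pow_sub_apply_of_mem (hf : ∀ j, ∀ x ∈ N j, f x ∈ N (j + 1))
    (hπ : ∀ x : N 0, π x = x) (hπ_ne : ∀ j ≠ 0, ∀ x ∈ N j, π x = 0) {j : ZMod m} {x : M}
    (hx : x ∈ N j) : ∑ k ∈ range m, (f ^ k) (π ((f ^ (m - k)) x)) = (f ^ m) x := by
  have hj := ZMod.val_lt j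
  rw [sum_eq_single_of_mem j.val (mem_range.2 hj)]
  · have hmem : (f ^ (m - j.val)) x ∈ N 0 := by
      simpa [Nat.cast_sub hj.le] using pow_apply_mem hf (m - j.val) hx
    rw [coe_apply_of_mem hπ hmem, ← mul_apply, ← pow_add, Nat.add_sub_cancel' hj.le]
  · intro k hk hkj
    have hk' := mem_range.1 hk
    have hne : j + ((m - k : ℕ) : ZMod m) ≠ 0 := by
      rw [Nat.cast_sub hk'.le, ZMod.natCast_self, zero_sub, ← sub_eq_add_neg, sub_ne_zero]
      rintro rfl
      exact hkj (ZMod.val_cast_of_lt hk').symm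
    rw [hπ_ne _ hne _ (pow_apply_mem hf (m - k) hx), ZeroMemClass.coe_zero, map_zero]

theorem sum_pow_proj_pow_sub_apply (hf : ∀ j, ∀ x ∈ N j, f x ∈ N (j + 1))
    (hπ : ∀ x : N 0, π x = x) (hπ_ne : ∀ j ≠ 0, ∀ x ∈ N j, π x = 0) (hN : ⨆ j, N j = ⊤)
    (x : M) : ∑ k ∈ range m, (f ^ k) (π ((f ^ (m - k)) x)) = (f ^ m) x :=
  Submodule.iSup_induction N (x := x) (hN ▸ Submodule.mem_top)
    (fun _ _ hx => sum_pow_proj_pow_sub_apply_of_mem hf hπ hπ_ne hx) (by simp)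
    (fun x y hx hy => by simp only [map_add, Submodule.coe_add, sum_add_distrib, hx, hy])

theorem sum_pow_proj_of_apply_eq_self (hf : ∀ j, ∀ x ∈ N j, f x ∈ N (j + 1))
    (hπ : ∀ x : N 0, π x = x) (hπ_ne : ∀ j ≠ 0, ∀ x ∈ N j, π x = 0) (hN : ⨆ j, N j = ⊤)
    {x : M} (hx : f x = x) : ∑ k ∈ range m, (f ^ k) (π x) = x := by
  have hpow (n : ℕ) : (f ^ n) x = x := by
    induction n with
    | zero => rfl
    | succ n ih => rw [pow_succ, mul_apply, hx, ih]
  simpa only [hpow] using sum_pow_proj_pow_sub_apply hf hπ hπ_ne hN x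

def eigenspaceOneEquiv (hf : ∀ j, ∀ x ∈ N j, f x ∈ N (j + 1))
    (hπ : ∀ x : N 0, π x = x) (hπ_ne : ∀ j ≠ 0, ∀ x ∈ N j, π x = 0) (hN : ⨆ j, N j = ⊤) :
    f.eigenspace 1 ≃ₗ[R] eigenspace (π ∘ₗ (f ^ m) ∘ₗ (N 0).subtype) 1 where
  toFun x := ⟨π x, mem_eigenspace_one.2 <| by
    have hx := mem_eigenspace_one.1 x.2
    simp only [LinearMap.comp_apply, Submodule.subtype_apply]
    rw [proj_pow_apply_eq_self_iff hf hπ, ← apply_sum_pow_eq_self_iff,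
      sum_pow_proj_of_apply_eq_self hf hπ hπ_ne hN hx, hx]⟩
  invFun y := ⟨∑ k ∈ range m, (f ^ k) (y : N 0), mem_eigenspace_one.2 <| by
    have hy := mem_eigenspace_one.1 y.2
    simp only [LinearMap.comp_apply, Submodule.subtype_apply] at hy
    rwa [apply_sum_pow_eq_self_iff, ← proj_pow_apply_eq_self_iff hf hπ]⟩
  map_add' x y := by ext; simp
  map_smul' c x := by ext; simp
  left_inv x := Subtype.ext <| sum_pow_proj_of_apply_eq_self hf hπ hπ_ne hN <|
    mem_eigenspace_one.1 x.2
  right_inv y := Subtype.ext <| proj_sum_pow_apply hf hπ hπ_ne y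

end Cyclic

end Module.End

theorem fix_eq_fix_of_cyclic_permutation_of_simple_ideals_general
    (s : Type*) [LieRing s] [LieAlgebra ℂ s]
    (m : ℕ) (hm : 1 ≤ m) (I : ZMod m → LieIdeal ℂ s)
    (hinternal : DirectSum.IsInternal fun j => (I j).toSubmodule)
    (α : s ≃ₗ⁅ℂ⁆ s)
    (hperm : ∀ j, ((I j).toSubmodule).map (α.toLinearEquiv : s →ₗ[ℂ] s) = (I (j + 1)).toSubmodule)
    (π₀ : s →ₗ[ℂ] ↥(I 0))
    (hproj : ∀ x : ↥(I 0), π₀ ↑x = x)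
    (hker : ∀ j : ZMod m, j ≠ 0 → ∀ x ∈ I j, π₀ x = 0) :
    Module.finrank ℂ ↥(Module.End.eigenspace (α.toLinearEquiv : s →ₗ[ℂ] s) 1)
      = Module.finrank ℂ ↥(Module.End.eigenspace
          (π₀ ∘ₗ ((α.toLinearEquiv : s →ₗ[ℂ] s) ^ m) ∘ₗ (I 0).toSubmodule.subtype) 1) := by
  have : NeZero m := ⟨by omega⟩
  have hmaps : ∀ j, ∀ x ∈ (I j).toSubmodule, α x ∈ (I (j + 1)).toSubmodule := fun j x hx =>
    hperm j ▸ Submodule.mem_map_of_mem hx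
  exact (Module.End.eigenspaceOneEquiv (N := fun j => (I j).toSubmodule) hmaps hproj hker
    hinternal.submodule_iSup_eq_top).finrank_eq

/-- Let `s` be a finite-dimensional semisimple Lie algebra over `ℂ` that is the internal
direct sum of `m ≥ 1` simple ideals `s₀ ⊕ s₁ ⊕ ⋯ ⊕ s_{m-1}`, let `α` be an automorphism of
`s` satisfying `α(s_j) = s_{j+1}` (indices mod `m`), let `π₀ : s → s₀` be the projection
associated with the direct sum decomposition (it restricts to the identity on `s₀` and
vanishes on the other summands), let `ι₀ : s₀ → s` be the inclusion, and set
`α₀ = π₀ ∘ α^m ∘ ι₀`. Then the fixed-point space of `α` on `s` and the fixed-point space of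
`α₀` on `s₀` have the same dimension. -/
theorem fix_eq_fix_of_cyclic_permutation_of_simple_ideals
    (s : Type*) [LieRing s] [LieAlgebra ℂ s] [FiniteDimensional ℂ s]
    (m : ℕ) (hm : 1 ≤ m) (I : ZMod m → LieIdeal ℂ s)
    (hsimple : ∀ j, LieAlgebra.IsSimple ℂ ↥(I j))
    (hinternal : DirectSum.IsInternal fun j => (I j).toSubmodule)
    (α : s ≃ₗ⁅ℂ⁆ s)
    (hperm : ∀ j, ((I j).toSubmodule).map (α.toLinearEquiv : s →ₗ[ℂ] s) = (I (j + 1)).toSubmodule)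
    (π₀ : s →ₗ[ℂ] ↥(I 0))
    (hproj : ∀ x : ↥(I 0), π₀ ↑x = x)
    (hker : ∀ j : ZMod m, j ≠ 0 → ∀ x ∈ I j, π₀ x = 0) :
    Module.finrank ℂ ↥(Module.End.eigenspace (α.toLinearEquiv : s →ₗ[ℂ] s) 1)
      = Module.finrank ℂ ↥(Module.End.eigenspace
          (π₀ ∘ₗ ((α.toLinearEquiv : s →ₗ[ℂ] s) ^ m) ∘ₗ (I 0).toSubmodule.subtype) 1) :=
  fix_eq_fix_of_cyclic_permutation_of_simple_ideals_general s m hm I hinternal α hperm π₀ hproj hker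
end

section
/- Let s be a finite-dimensional Lie algebra over ℂ that is the direct sum of m ≥ 1 simple ideals s₀ ⊕ s₁ ⊕ ⋯ ⊕ s_{m−1}, let α be an automorphism of s satisfying α(s_j) = s_{j+1} (indices mod m), and let π_j : s → s_j denote the projections. Suppose v ∈ s is a nonzero eigenvector of α with eigenvalue λ ≠ 0. Then every component π_j(v) is nonzero, the components π₀(v), …, π_{m−1}(v) are linearly independent, their span V is an α-stable subspace of s, and the eigenvalues of the restriction of α to V are exactly the m distinct numbers ω·λ where ω ranges over the m-th roots of unity. -/
/-!
Because `α` carries `s_j` onto `s_{j+1}`, it intertwines the projections,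
`π_{j+1} ∘ α = α ∘ π_j`; applied to `α v = λ v` this gives `α (π_j v) = λ • π_{j+1} v`, so on the
components `α` is `λ` times the cyclic shift. Hence one vanishing component forces all of them to
vanish, the nonzero components lie in independent summands, and `α ^ m = λ ^ m` on their span, so
every eigenvalue `μ` there has `(μ / λ) ^ m = 1`. Conversely, for `ω ^ m = 1` the vector
`∑ j, ω⁻¹ ^ j • π_j v` is an eigenvector with eigenvalue `ω * λ`.
-/

open Module Submodule

section Projections

variable {R M : Type*} [Semiring R] [AddCommMonoid M] [Module R M] {ι : Type*}
  {N : ι → Submodule R M} {π : ι → M →ₗ[R] M}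

theorem LinearMap.ext_of_iSup_eq_top {M' : Type*} [AddCommMonoid M'] [Module R M']
    (hN : iSup N = ⊤) {f g : M →ₗ[R] M'} (h : ∀ i, ∀ x ∈ N i, f x = g x) : f = g :=
  LinearMap.ext fun x => iSup_induction N (motive := fun x => f x = g x) (hN ▸ mem_top) h
    (by rw [map_zero, map_zero]) fun x y hx hy => by rw [map_add, map_add, hx, hy]

theorem sum_projections_apply [Fintype ι] (hid : ∀ j, ∀ x ∈ N j, π j x = x)
    (hzero : ∀ j k, j ≠ k → ∀ x ∈ N k, π j x = 0) (hN : iSup N = ⊤) (x : M) : ∑ j, π j x = x := by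
  classical
  suffices ∑ j, π j = LinearMap.id by simpa using congr($this x)
  refine LinearMap.ext_of_iSup_eq_top hN fun k x hx => ?_
  rw [LinearMap.sum_apply, Finset.sum_eq_single k
    (fun j _ hj => hzero j k hj x hx) (by simp), hid k x hx, LinearMap.id_apply]

theorem projection_apply_comm (hid : ∀ j, ∀ x ∈ N j, π j x = x)
    (hzero : ∀ j k, j ≠ k → ∀ x ∈ N k, π j x = 0) {A : M →ₗ[R] M} {σ : ι → ι} (hσ : σ.Injective)
    (hA : ∀ j, (N j).map A ≤ N (σ j)) (hN : iSup N = ⊤) (j : ι) (x : M) :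
    π (σ j) (A x) = A (π j x) := by
  suffices π (σ j) ∘ₗ A = A ∘ₗ π j from congr($this x)
  refine LinearMap.ext_of_iSup_eq_top hN fun k x hx => ?_
  have hAx : A x ∈ N (σ k) := hA k (mem_map_of_mem hx)
  by_cases hk : j = k
  · subst hk
    simp [hid _ _ hAx, hid _ _ hx]
  · simp [hzero _ _ (hσ.ne hk) _ hAx, hzero _ _ hk _ hx]

end Projections

theorem ZMod.pow_val_natCast {G : Type*} [Monoid G] {a : G} {n : ℕ} (ha : a ^ n = 1) (k : ℕ) :
    a ^ (k : ZMod n).val = a ^ k := by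
  rw [ZMod.val_natCast, ← pow_eq_pow_mod k ha]

theorem ZMod.pow_val_add_one {G : Type*} [Monoid G] {a : G} {n : ℕ} [NeZero n] (ha : a ^ n = 1)
    (j : ZMod n) : a ^ (j + 1).val = a ^ j.val * a := by
  rw [← ZMod.natCast_zmod_val j, ← Nat.cast_succ, ZMod.pow_val_natCast ha, ZMod.pow_val_natCast ha,
    pow_succ]

section CyclicShift

variable {K M : Type*} [Field K] [AddCommGroup M] [Module K M] {n : ℕ}
  {A : M →ₗ[K] M} {w : ZMod n → M} {lam : K}

theorem pow_apply_of_apply_eq_smul_succ (hA : ∀ j, A (w j) = lam • w (j + 1)) (k : ℕ)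
    (j : ZMod n) : (A ^ k) (w j) = lam ^ k • w (j + k) := by
  induction k generalizing j with
  | zero => simp
  | succ k ih => rw [pow_succ, Module.End.mul_apply, hA, map_smul, ih, smul_smul, pow_succ',
      Nat.cast_succ, add_comm (k : ZMod n), add_assoc]

theorem pow_card_apply_of_mem_span (hA : ∀ j, A (w j) = lam • w (j + 1)) {x : M}
    (hx : x ∈ span K (Set.range w)) : (A ^ n) x = lam ^ n • x := by
  refine LinearMap.eqOn_span (f := A ^ n) (g := lam ^ n • LinearMap.id) ?_ hx
  rintro _ ⟨j, rfl⟩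
  simp [pow_apply_of_apply_eq_smul_succ hA]

theorem forall_ne_zero_of_apply_eq_smul_succ [NeZero n] (hA : ∀ j, A (w j) = lam • w (j + 1))
    (hlam : lam ≠ 0) (hw : ∑ j, w j ≠ 0) (j : ZMod n) : w j ≠ 0 := by
  intro hj
  have hzero : ∀ k : ℕ, w (j + k) = 0 := fun k =>
    (smul_eq_zero.mp (by rw [← pow_apply_of_apply_eq_smul_succ hA, hj, map_zero])).resolve_left
      (pow_ne_zero k hlam)
  refine hw (Finset.sum_eq_zero fun i _ => ?_)
  simpa [ZMod.natCast_zmod_val] using hzero (i - j).val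

theorem map_span_range_eq_of_apply_eq_smul_succ (hA : ∀ j, A (w j) = lam • w (j + 1))
    (hlam : lam ≠ 0) : (span K (Set.range w)).map A = span K (Set.range w) := by
  have hAw : A ∘ w = lam • (w ∘ (Equiv.addRight 1)) := funext hA
  rw [map_span, ← Set.range_comp, hAw, Pi.smul_def, Set.range_smul,
    span_smul_eq_of_isUnit _ _ hlam.isUnit, EquivLike.range_comp]

theorem pow_eq_of_hasEigenvalue_restrict (hA : ∀ j, A (w j) = lam • w (j + 1))
    (hV : ∀ x ∈ span K (Set.range w), A x ∈ span K (Set.range w)) {μ : K}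
    (hμ : End.HasEigenvalue (A.restrict hV) μ) : μ ^ n = lam ^ n := by
  obtain ⟨x, hx⟩ := hμ.exists_hasEigenvector
  have hx' : End.HasEigenvector A μ x :=
    ⟨End.mem_eigenspace_iff.mpr (congr_arg Subtype.val hx.apply_eq_smul), by simpa using hx.2⟩
  refine smul_left_injective K hx'.2 ?_
  simp only [← hx'.pow_apply, pow_card_apply_of_mem_span hA x.2]

theorem hasEigenvalue_restrict_of_pow_eq_one [NeZero n] (hA : ∀ j, A (w j) = lam • w (j + 1))
    (hw : LinearIndependent K w)
    (hV : ∀ x ∈ span K (Set.range w), A x ∈ span K (Set.range w)) {ω : K} (hω : ω ^ n = 1) :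
    End.HasEigenvalue (A.restrict hV) (ω * lam) := by
  have hω₀ : ω ≠ 0 := by rintro rfl; simp [zero_pow (NeZero.ne n)] at hω
  have hν : ω⁻¹ ^ n = 1 := by rw [inv_pow, hω, inv_one]
  set x := ∑ j, ω⁻¹ ^ j.val • w j
  have hxV : x ∈ span K (Set.range w) := sum_mem fun j _ => smul_mem _ _ (subset_span ⟨j, rfl⟩)
  have hx₀ : x ≠ 0 := fun h => by simpa using Fintype.linearIndependent_iff.mp hw _ h 0
  have hAx : A x = (ω * lam) • x :=
    calc A x = ∑ j, (ω⁻¹ ^ j.val * lam) • w (j + 1) := by simp [x, hA, smul_smul]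
      _ = ∑ j, (ω * lam * ω⁻¹ ^ (j + 1).val) • w (j + 1) := by
        congr! 2 with j
        rw [ZMod.pow_val_add_one hν]
        field_simp
      _ = ∑ j, (ω * lam * ω⁻¹ ^ j.val) • w j :=
        Fintype.sum_equiv (Equiv.addRight 1) _ _ fun _ => rfl
      _ = (ω * lam) • x := by simp only [x, Finset.smul_sum, smul_smul]
  exact End.hasEigenvalue_of_hasEigenvector (x := ⟨x, hxV⟩)
    ⟨End.mem_eigenspace_iff.mpr (Subtype.ext hAx), by simpa using hx₀⟩

theorem setOf_hasEigenvalue_restrict_eq [NeZero n] (hA : ∀ j, A (w j) = lam • w (j + 1))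
    (hlam : lam ≠ 0) (hw : LinearIndependent K w)
    (hV : ∀ x ∈ span K (Set.range w), A x ∈ span K (Set.range w)) :
    {μ | End.HasEigenvalue (A.restrict hV) μ} = {μ | ∃ ω : K, ω ^ n = 1 ∧ μ = ω * lam} := by
  ext μ
  refine ⟨fun hμ => ⟨μ / lam, ?_, (div_mul_cancel₀ μ hlam).symm⟩, ?_⟩
  · rw [div_pow, pow_eq_of_hasEigenvalue_restrict hA hV hμ, div_self (pow_ne_zero n hlam)]
  · rintro ⟨ω, hω, rfl⟩
    exact hasEigenvalue_restrict_of_pow_eq_one hA hw hV hω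

end CyclicShift

theorem IsPrimitiveRoot.ncard_setOf_exists_pow_eq_one_mul {K : Type*} [Field K] {n : ℕ}
    [NeZero n] {ζ : K} (hζ : IsPrimitiveRoot ζ n) {lam : K} (hlam : lam ≠ 0) :
    {μ | ∃ ω : K, ω ^ n = 1 ∧ μ = ω * lam}.ncard = n := by
  have himage : {μ | ∃ ω : K, ω ^ n = 1 ∧ μ = ω * lam}
      = (· * lam) '' (Polynomial.nthRootsFinset n (1 : K) : Set K) := by
    ext μ
    simp [Polynomial.mem_nthRootsFinset (NeZero.pos n), eq_comm]
  rw [himage, Set.ncard_image_of_injective _ (mul_left_injective₀ hlam), Set.ncard_coe_finset,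
    hζ.card_nthRootsFinset]

theorem components_of_eigenvector_of_cyclic_permutation_general
    (s : Type*) [LieRing s] [LieAlgebra ℂ s]
    (m : ℕ) (hm : 1 ≤ m) (I : ZMod m → LieIdeal ℂ s)
    (hinternal : DirectSum.IsInternal fun j => (I j).toSubmodule)
    (α : s ≃ₗ⁅ℂ⁆ s)
    (hperm : ∀ j, ((I j).toSubmodule).map (α.toLinearEquiv : s →ₗ[ℂ] s) = (I (j + 1)).toSubmodule)
    (π : ZMod m → (s →ₗ[ℂ] s))
    (hmem : ∀ j x, π j x ∈ I j)
    (hid : ∀ j, ∀ x ∈ I j, π j x = x)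
    (hzero : ∀ j k, j ≠ k → ∀ x ∈ I k, π j x = 0)
    (v : s) (hv : v ≠ 0) (lam : ℂ) (hlam : lam ≠ 0)
    (heigen : α v = lam • v) :
    (∀ j, π j v ≠ 0) ∧
    LinearIndependent ℂ (fun j => π j v) ∧
    (Submodule.span ℂ (Set.range fun j => π j v)).map (α.toLinearEquiv : s →ₗ[ℂ] s)
        = Submodule.span ℂ (Set.range fun j => π j v) ∧
    ∀ hV : ∀ x ∈ Submodule.span ℂ (Set.range fun j => π j v),
        (α.toLinearEquiv : s →ₗ[ℂ] s) x ∈ Submodule.span ℂ (Set.range fun j => π j v),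
      {μ : ℂ | Module.End.HasEigenvalue
            ((α.toLinearEquiv : s →ₗ[ℂ] s).restrict hV) μ}
          = {μ : ℂ | ∃ ω : ℂ, ω ^ m = 1 ∧ μ = ω * lam} ∧
      {μ : ℂ | Module.End.HasEigenvalue
            ((α.toLinearEquiv : s →ₗ[ℂ] s).restrict hV) μ}.ncard = m := by
  have : NeZero m := ⟨by omega⟩
  have htop := hinternal.submodule_iSup_eq_top
  have hshift : ∀ j, (α.toLinearEquiv : s →ₗ[ℂ] s) (π j v) = lam • π (j + 1) v := fun j => by
    rw [← projection_apply_comm hid hzero (add_left_injective 1) (fun j => (hperm j).le) htop]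
    exact congr(π (j + 1) $heigen).trans (map_smul _ _ _)
  have hne : ∀ j, π j v ≠ 0 :=
    forall_ne_zero_of_apply_eq_smul_succ hshift hlam (by rwa [sum_projections_apply hid hzero htop])
  have hli := hinternal.submodule_iSupIndep.linearIndependent _ (hmem · v) hne
  refine ⟨hne, hli, map_span_range_eq_of_apply_eq_smul_succ hshift hlam, fun hV => ?_⟩
  rw [setOf_hasEigenvalue_restrict_eq hshift hlam hli]
  exact ⟨rfl, (Complex.isPrimitiveRoot_exp m (by omega)).ncard_setOf_exists_pow_eq_one_mul hlam⟩

/-- Let `s` be a finite-dimensional Lie algebra over `ℂ` that is the internal direct sum of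
`m ≥ 1` simple ideals `s₀ ⊕ s₁ ⊕ ⋯ ⊕ s_{m-1}`, let `α` be an automorphism of `s` with
`α(s_j) = s_{j+1}` (indices mod `m`), and let `π_j : s → s` denote the projections onto the
summands. Suppose `v ∈ s` is a nonzero eigenvector of `α` with eigenvalue `λ ≠ 0`. Then every
component `π_j v` is nonzero, the components are linearly independent, their span `V` is an
`α`-stable subspace of `s`, and the eigenvalues of the restriction of `α` to `V` are exactly
the `m` distinct numbers `ω * λ` where `ω` ranges over the `m`-th roots of unity. -/
theorem components_of_eigenvector_of_cyclic_permutation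
    (s : Type*) [LieRing s] [LieAlgebra ℂ s] [FiniteDimensional ℂ s]
    (m : ℕ) (hm : 1 ≤ m) (I : ZMod m → LieIdeal ℂ s)
    (hsimple : ∀ j, LieAlgebra.IsSimple ℂ ↥(I j))
    (hinternal : DirectSum.IsInternal fun j => (I j).toSubmodule)
    (α : s ≃ₗ⁅ℂ⁆ s)
    (hperm : ∀ j, ((I j).toSubmodule).map (α.toLinearEquiv : s →ₗ[ℂ] s) = (I (j + 1)).toSubmodule)
    (π : ZMod m → (s →ₗ[ℂ] s))
    (hmem : ∀ j x, π j x ∈ I j)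
    (hid : ∀ j, ∀ x ∈ I j, π j x = x)
    (hzero : ∀ j k, j ≠ k → ∀ x ∈ I k, π j x = 0)
    (v : s) (hv : v ≠ 0) (lam : ℂ) (hlam : lam ≠ 0)
    (heigen : α v = lam • v) :
    (∀ j, π j v ≠ 0) ∧
    LinearIndependent ℂ (fun j => π j v) ∧
    (Submodule.span ℂ (Set.range fun j => π j v)).map (α.toLinearEquiv : s →ₗ[ℂ] s)
        = Submodule.span ℂ (Set.range fun j => π j v) ∧
    ∀ hV : ∀ x ∈ Submodule.span ℂ (Set.range fun j => π j v),
        (α.toLinearEquiv : s →ₗ[ℂ] s) x ∈ Submodule.span ℂ (Set.range fun j => π j v),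
      {μ : ℂ | Module.End.HasEigenvalue
            ((α.toLinearEquiv : s →ₗ[ℂ] s).restrict hV) μ}
          = {μ : ℂ | ∃ ω : ℂ, ω ^ m = 1 ∧ μ = ω * lam} ∧
      {μ : ℂ | Module.End.HasEigenvalue
            ((α.toLinearEquiv : s →ₗ[ℂ] s).restrict hV) μ}.ncard = m :=
  components_of_eigenvector_of_cyclic_permutation_general s m hm I hinternal α hperm π hmem hid
    hzero v hv lam hlam heigen
end

section
/- For every natural number c ≥ 1 there exists a finite-dimensional nilpotent Lie algebra g over ℂ whose nilpotency class is at least c, together with a Lie algebra automorphism α of g satisfying α ∘ α = id and whose fixed-point subspace {x ∈ g : α(x) = x} is one-dimensional. (Consequently, the nilpotency class of a Lie algebra admitting an automorphism of prime order p with m-dimensional fixed-point space cannot be bounded in terms of p and m alone.) -/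
/-!
The standard filiform Lie algebra of class `c` is the semidirect sum of the abelian ideal
`F[X]/(X^c)` with the line `F`, which acts by multiplication by `X`. Bracketing with `inr 1`
multiplies by `X`, so `inl (X^k)` survives in the `k`-th term of the lower central series, while
after one bracket every `ad x` is a multiple of multiplication by `X`, hence nilpotent, and Engel's
theorem applies. As the ideal is abelian, the ideal component of a bracket is linear in the ideal
components of its arguments, so negating the ideal is an automorphism; in characteristic zero its
fixed points are exactly the line `F`.
-/

open Polynomial LieAlgebra LieModule

def LieDerivation.ofIsLieAbelian {R K : Type*} [CommRing R] [LieRing K] [LieAlgebra R K]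
    [IsLieAbelian K] (f : K →ₗ[R] K) : LieDerivation R K K where
  __ := f
  leibniz' a b := by simp [trivial_lie_zero]

namespace LieAlgebra.SemiDirectSum

variable {R K L : Type*} [CommRing R] [LieRing K] [LieAlgebra R K] [LieRing L] [LieAlgebra R L]
  (ψ : L →ₗ⁅R⁆ LieDerivation R K K)

instance [Module.Finite R K] [Module.Finite R L] : Module.Finite R (K ⋊⁅ψ⁆ L) :=
  .equiv (toProdl ψ).symm

instance [IsNoetherian R K] [IsNoetherian R L] : IsNoetherian R (K ⋊⁅ψ⁆ L) :=
  isNoetherian_of_linearEquiv (toProdl ψ).symm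

lemma inr_injective : Function.Injective (inr ψ) :=
  fun _ _ h ↦ congrArg SemiDirectSum.right h

lemma lie_inr_inl (x : L) (v : K) : ⁅inr ψ x, inl ψ v⁆ = inl ψ (ψ x v) := by
  ext <;> simp

lemma inl_pow_apply_mem_lowerCentralSeries (x : L) (v : K) (k : ℕ) :
    inl ψ (((ψ x : Module.End R K) ^ k) v) ∈ lowerCentralSeries R (K ⋊⁅ψ⁆ L) (K ⋊⁅ψ⁆ L) k := by
  induction k with
  | zero => exact LieSubmodule.mem_top _
  | succ k ih =>
    rw [lowerCentralSeries_succ, pow_succ', Module.End.mul_apply, LieDerivation.coeFn_coe,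
      ← lie_inr_inl]
    exact LieSubmodule.lie_mem_lie (LieSubmodule.mem_top _) ih

section IsLieAbelian

variable [IsLieAbelian K]

def negLeft : (K ⋊⁅ψ⁆ L) ≃ₗ⁅R⁆ (K ⋊⁅ψ⁆ L) where
  toFun x := ⟨-x.left, x.right⟩
  invFun x := ⟨-x.left, x.right⟩
  map_add' x y := by ext <;> simp [add_comm]
  map_smul' t x := by ext <;> simp
  map_lie' {x y} := by ext <;> simp [trivial_lie_zero]; abel
  left_inv x := by simp
  right_inv x := by simp

lemma negLeft_negLeft (x : K ⋊⁅ψ⁆ L) : negLeft ψ (negLeft ψ x) = x :=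
  (negLeft ψ).left_inv x

lemma eigenspace_negLeft_one [IsAddTorsionFree K] :
    Module.End.eigenspace ((negLeft ψ).toLinearEquiv : K ⋊⁅ψ⁆ L →ₗ[R] K ⋊⁅ψ⁆ L) 1 =
      LinearMap.range (inr ψ : L →ₗ[R] K ⋊⁅ψ⁆ L) := by
  ext x
  rw [Module.End.mem_eigenspace_iff, one_smul, LinearMap.mem_range]
  constructor
  · intro h
    have hx : x.left = 0 := neg_eq_self.mp (congrArg SemiDirectSum.left h)
    exact ⟨x.right, by ext <;> simp [hx]⟩
  · rintro ⟨t, rfl⟩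
    ext <;> simp [negLeft]

lemma lie_inl (x : K ⋊⁅ψ⁆ L) (v : K) : ⁅x, inl ψ v⁆ = inl ψ (ψ x.right v) := by
  ext <;> simp [trivial_lie_zero]

variable [IsLieAbelian L]

lemma lie_eq_inl (x y : K ⋊⁅ψ⁆ L) : ⁅x, y⁆ = inl ψ (ψ x.right y.left - ψ y.right x.left) := by
  ext <;> simp [trivial_lie_zero]

lemma ad_pow_succ_apply (x y : K ⋊⁅ψ⁆ L) (k : ℕ) :
    (ad R _ x ^ (k + 1)) y =
      inl ψ (((ψ x.right : Module.End R K) ^ k) (ψ x.right y.left - ψ y.right x.left)) := by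
  induction k with
  | zero => exact lie_eq_inl ψ x y
  | succ k ih =>
    rw [pow_succ', Module.End.mul_apply, ih, ad_apply, lie_inl, pow_succ', Module.End.mul_apply,
      LieDerivation.coeFn_coe]

theorem isNilpotent_of_forall_isNilpotent [IsNoetherian R K] [IsNoetherian R L]
    (h : ∀ x, IsNilpotent (ψ x : Module.End R K)) : LieRing.IsNilpotent (K ⋊⁅ψ⁆ L) := by
  rw [isNilpotent_iff_forall (R := R)]
  intro x
  obtain ⟨k, hk⟩ := h x.right
  exact ⟨k + 1, LinearMap.ext fun y ↦ by simp [ad_pow_succ_apply, hk]⟩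

end IsLieAbelian

end LieAlgebra.SemiDirectSum

section AdjoinRoot

variable {R : Type*} [CommRing R] (c : ℕ)

lemma AdjoinRoot.root_X_pow_pow_eq_zero : AdjoinRoot.root (X ^ c : R[X]) ^ c = 0 := by
  rw [← AdjoinRoot.mk_X, ← map_pow, AdjoinRoot.mk_self]

variable {c} in
lemma AdjoinRoot.root_X_pow_pow_ne_zero [IsDomain R] {k : ℕ} (hk : k < c) :
    AdjoinRoot.root (X ^ c : R[X]) ^ k ≠ 0 := by
  rw [← AdjoinRoot.mk_X, ← map_pow, Ne, AdjoinRoot.mk_eq_zero,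
    pow_dvd_pow_iff X_ne_zero not_isUnit_X]
  omega

instance : Module.Finite R (AdjoinRoot (X ^ c : R[X])) := (monic_X_pow c).finite_adjoinRoot

end AdjoinRoot

noncomputable section

attribute [local instance] LieRing.ofAssociativeRing

instance CommRing.isLieAbelian {A : Type*} [CommRing A] : IsLieAbelian A :=
  isMulCommutative_iff_isLieAbelian.mp inferInstance

def LieHom.toSpanSingleton (R : Type*) {M : Type*} [CommRing R] [LieRing M] [LieAlgebra R M]
    (m : M) : R →ₗ⁅R⁆ M where
  __ := LinearMap.toSpanSingleton R M m
  map_lie' {t s} := by simp [Ring.lie_def, mul_comm]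

variable (F : Type*) [Field F] (c : ℕ)

def filiformAction :
    F →ₗ⁅F⁆ LieDerivation F (AdjoinRoot (X ^ c : F[X])) (AdjoinRoot (X ^ c : F[X])) :=
  LieHom.toSpanSingleton F (LieDerivation.ofIsLieAbelian (LinearMap.mulLeft F (AdjoinRoot.root _)))

lemma filiformAction_apply (t : F) :
    (filiformAction F c t : Module.End F (AdjoinRoot (X ^ c : F[X]))) =
      t • LinearMap.mulLeft F (AdjoinRoot.root (X ^ c : F[X])) := rfl

/-- The basis `e₁ = inr 1`, `e_{i+2} = inl (root ^ i)` satisfies `⁅e₁, e_i⁆ = e_{i+1}`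
for `2 ≤ i ≤ c`. -/
abbrev StandardFiliform : Type _ := AdjoinRoot (X ^ c : F[X]) ⋊⁅filiformAction F c⁆ F

namespace StandardFiliform

-- Restated so that they are found outside this section, without `LieRing.ofAssociativeRing`.
instance : LieRing (StandardFiliform F c) := inferInstance
instance : LieAlgebra F (StandardFiliform F c) := inferInstance
instance : Module.Finite F (StandardFiliform F c) := inferInstance

instance : LieRing.IsNilpotent (StandardFiliform F c) := by
  refine SemiDirectSum.isNilpotent_of_forall_isNilpotent _ fun t ↦ ?_
  rw [filiformAction_apply]
  refine IsNilpotent.smul ⟨c, ?_⟩ t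
  rw [LinearMap.pow_mulLeft, AdjoinRoot.root_X_pow_pow_eq_zero, LinearMap.mulLeft_zero_eq_zero]

variable {F c} in
lemma lowerCentralSeries_ne_bot {k : ℕ} (hk : k < c) :
    lowerCentralSeries F (StandardFiliform F c) (StandardFiliform F c) k ≠ ⊥ := by
  intro h
  have hmem := SemiDirectSum.inl_pow_apply_mem_lowerCentralSeries (filiformAction F c) 1 1 k
  rw [h, LieSubmodule.mem_bot, filiformAction_apply, one_smul, LinearMap.pow_mulLeft,
    LinearMap.mulLeft_apply, mul_one] at hmem
  exact AdjoinRoot.root_X_pow_pow_ne_zero hk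
    (SemiDirectSum.inl_injective _ (hmem.trans (map_zero _).symm))

def involution : StandardFiliform F c ≃ₗ⁅F⁆ StandardFiliform F c :=
  SemiDirectSum.negLeft _

lemma involution_involution (x : StandardFiliform F c) : involution F c (involution F c x) = x :=
  SemiDirectSum.negLeft_negLeft _ x

lemma finrank_eigenspace_involution_one [CharZero F] :
    Module.finrank F (Module.End.eigenspace
      ((involution F c).toLinearEquiv : StandardFiliform F c →ₗ[F] StandardFiliform F c) 1) = 1 := by
  have := IsAddTorsionFree.of_isTorsionFree F (AdjoinRoot (X ^ c : F[X]))
  rw [involution, SemiDirectSum.eigenspace_negLeft_one,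
    LinearMap.finrank_range_of_inj (SemiDirectSum.inr_injective _), Module.finrank_self]

end StandardFiliform

end

/-- For every natural number `c ≥ 1` there exists a finite-dimensional nilpotent Lie algebra
`g` over `ℂ` whose nilpotency class is at least `c` (i.e. the `(c-1)`-st term of the lower
central series is nonzero), together with a Lie algebra automorphism `α` of `g` with
`α ∘ α = id` whose fixed-point subspace is one-dimensional. -/
theorem exists_nilpotent_with_involution_small_fix (c : ℕ) (hc : 1 ≤ c) :
    ∃ (g : Type) (_ : LieRing g) (_ : LieAlgebra ℂ g),
      FiniteDimensional ℂ g ∧ LieRing.IsNilpotent g ∧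
      LieModule.lowerCentralSeries ℂ g g (c - 1) ≠ ⊥ ∧
      ∃ α : g ≃ₗ⁅ℂ⁆ g, (∀ x, α (α x) = x) ∧
        Module.finrank ℂ
          ↥(Module.End.eigenspace (α.toLinearEquiv : g →ₗ[ℂ] g) 1) = 1 :=
  ⟨StandardFiliform ℂ c, inferInstance, inferInstance, inferInstance, inferInstance,
    StandardFiliform.lowerCentralSeries_ne_bot (by omega), StandardFiliform.involution ℂ c,
    StandardFiliform.involution_involution ℂ c,
    StandardFiliform.finrank_eigenspace_involution_one ℂ c⟩
end
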